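/- Let G be a locally compact Hausdorff Abelian group with Haar measure λ, let V ⊆ G be a nonempty open set with compact closure, let C > 0, and let (μ_i)_{i∈I} be a net of complex measures on G given in polar form μ_i = h_i·ν_i (ν_i positive, |h_i| = 1) with ν_i(t + V) ≤ C for all i ∈ I and t ∈ G. If for all continuous compactly supported φ, ψ : G → ℂ the net i ↦ ∫_G (φ ∗ ψ̃)(s) · h_i(s) dν_i(s) converges in ℂ, where (φ ∗ ψ̃)(y) := ∫_G φ(z) conj(ψ(z − y)) dλ(z), then for every continuous compactly supported φ : G → ℂ the net i ↦ ∫_G φ(s) · h_i(s) dν_i(s) converges in ℂ. -/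

import Mathlib

open MeasureTheory Filter Topology Pointwise
open scoped ENNReal NNReal ComplexConjugate Uniformity

noncomputable section

section Aux

variable {G : Type*} [AddCommGroup G] [TopologicalSpace G] [IsTopologicalAddGroup G]

/-- Any compact set is covered by finitely many translates of a nonempty open set. -/
lemma aux_cover {V : Set G} (hV_ne : V.Nonempty) (hV_open : IsOpen V)
    {K : Set G} (hK : IsCompact K) :
    ∃ F : Finset G, K ⊆ ⋃ t ∈ F, t +ᵥ V := by
  obtain ⟨x₀, hx₀⟩ := hV_ne
  exact hK.elim_finite_subcover (fun t : G => t +ᵥ V)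
    (fun t => hV_open.vadd t)
    (fun k _ => Set.mem_iUnion.2 ⟨k - x₀, ⟨x₀, hx₀, by simp⟩⟩)

/-- Uniform continuity of a continuous compactly supported function, stated with
neighborhoods of zero. -/
lemma aux_unifcont {φ : G → ℂ} (hφc : Continuous φ) (hφs : HasCompactSupport φ)
    {ε : ℝ} (hε : 0 < ε) :
    ∃ U ∈ 𝓝 (0 : G), ∀ s w : G, w ∈ U → ‖φ (s + w) - φ s‖ < ε := by
  letI : UniformSpace G := IsTopologicalAddGroup.rightUniformSpace G
  haveI : IsUniformAddGroup G := isUniformAddGroup_of_addCommGroup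
  have hu : UniformContinuous φ := hφs.uniformContinuous_of_continuous hφc
  have h1 : {p : ℂ × ℂ | dist p.1 p.2 < ε} ∈ 𝓤 ℂ := Metric.dist_mem_uniformity hε
  have h2 := hu h1
  rw [uniformity_eq_comap_nhds_zero G, Filter.mem_map, Filter.mem_comap] at h2
  obtain ⟨U, hU, hUsub⟩ := h2
  refine ⟨U, hU, fun s w hw => ?_⟩
  have hmem : ((s, s + w) : G × G) ∈ (fun x : G × G => x.2 - x.1) ⁻¹' U := by
    simpa using hw
  have := hUsub hmem
  simpa [dist_eq_norm, norm_sub_rev] using this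

lemma aux_tsupport_sub {X : Type*} [TopologicalSpace X] (f g : X → ℂ) :
    tsupport (fun x => f x - g x) ⊆ tsupport f ∪ tsupport g := by
  apply closure_minimal
  · intro x hx
    simp only [Function.mem_support] at hx
    by_contra hcon
    rw [Set.mem_union, not_or] at hcon
    obtain ⟨h1, h2⟩ := hcon
    have e1 : f x = 0 := image_eq_zero_of_notMem_tsupport h1
    have e2 : g x = 0 := image_eq_zero_of_notMem_tsupport h2
    exact hx (by simp [e1, e2])
  · exact (isClosed_tsupport f).union (isClosed_tsupport g)

/-- Existence of a nonnegative continuous bump with compact support inside a given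
neighborhood of zero, of total integral one. -/
lemma aux_bump [LocallyCompactSpace G] [T2Space G] [MeasurableSpace G] [BorelSpace G]
    (haar : Measure G) [haar.IsAddHaarMeasure] {U : Set G} (hU : U ∈ 𝓝 (0 : G)) :
    ∃ ψ : G → ℝ, Continuous ψ ∧ HasCompactSupport ψ ∧ (∀ x, 0 ≤ ψ x) ∧
      Function.support ψ ⊆ U ∧ ∫ x, ψ x ∂haar = 1 := by
  have h0 : (0 : G) ∈ interior U := mem_interior_iff_mem_nhds.2 hU
  have hd : Disjoint ({(0 : G)} : Set G) (interior U)ᶜ := by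
    simp [Set.disjoint_singleton_left, h0]
  obtain ⟨f, hf1, hf0, hfs, hf01⟩ :=
    exists_continuous_one_zero_of_isCompact (isCompact_singleton (x := (0 : G)))
      isOpen_interior.isClosed_compl hd
  have hfc : Continuous f := f.continuous
  have hnn : ∀ x, 0 ≤ f x := fun x => (hf01 x).1
  have hsupp : Function.support f ⊆ U := by
    intro x hx
    have hxint : x ∈ interior U := by
      by_contra hcon
      exact hx (hf0 hcon)
    exact interior_subset hxint
  have hint : Integrable (f : G → ℝ) haar := hfc.integrable_of_hasCompactSupport hfs
  have hpos : 0 < ∫ x, f x ∂haar := by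
    rw [integral_pos_iff_support_of_nonneg hnn hint]
    have h0s : (0 : G) ∈ Function.support f := by
      simp [Function.mem_support, hf1 (Set.mem_singleton (0 : G))]
    exact (hfc.isOpen_support).measure_pos haar ⟨0, h0s⟩
  refine ⟨fun x => (∫ y, f y ∂haar)⁻¹ * f x, continuous_const.mul hfc,
    hfs.comp_left (g := fun y => (∫ y, f y ∂haar)⁻¹ * y) (by simp),
    fun x => mul_nonneg (inv_nonneg.2 hpos.le) (hnn x), ?_, ?_⟩
  · intro x hx
    apply hsupp
    simp only [Function.mem_support] at hx ⊢
    intro hfx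
    exact hx (by simp [hfx])
  · rw [integral_const_mul, inv_mul_cancel₀ hpos.ne']

end Aux

/-- For a uniformly translation bounded net of complex measures
`μ_i = h_i · ν_i` in polar form, if the integrals against all double convolutions
`φ ∗ ψ̃` converge, then the integrals against all continuous compactly supported
functions converge. -/
theorem vague_convergence_from_convolution_tests
    {G : Type*} [AddCommGroup G] [TopologicalSpace G] [IsTopologicalAddGroup G]
    [LocallyCompactSpace G] [T2Space G] [MeasurableSpace G] [BorelSpace G]
    {I : Type*} [Preorder I] [Nonempty I] [IsDirected I (· ≤ ·)]
    (haar : Measure G) [haar.IsAddHaarMeasure]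
    (V : Set G) (hV_ne : V.Nonempty) (hV_open : IsOpen V)
    (hV_cpt : IsCompact (closure V))
    (C : ℝ≥0) (hC : 0 < C)
    (ν : I → Measure G) (h : I → G → ℂ)
    (hh_meas : ∀ i, Measurable (h i)) (hh_norm : ∀ i x, ‖h i x‖ = 1)
    (hbdd : ∀ i : I, ∀ t : G, ν i (t +ᵥ V) ≤ (C : ℝ≥0∞))
    (hconv : ∀ φ ψ : G → ℂ, Continuous φ → HasCompactSupport φ →
      Continuous ψ → HasCompactSupport ψ →
      ∃ c : ℂ, Tendsto
        (fun i => ∫ s, (∫ z, φ z * conj (ψ (z - s)) ∂haar) * h i s ∂(ν i))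
        atTop (𝓝 c)) :
    ∀ φ : G → ℂ, Continuous φ → HasCompactSupport φ →
      ∃ c : ℂ, Tendsto (fun i => ∫ s, φ s * h i s ∂(ν i)) atTop (𝓝 c) := by
  intro φ hφc hφs
  -- A uniform (in `i`) bound on the measures of any fixed compact set.
  have bound : ∀ K' : Set G, IsCompact K' → ∃ M : ℝ≥0, ∀ i, ν i K' ≤ (M : ℝ≥0∞) := by
    intro K' hK'
    obtain ⟨F, hF⟩ := aux_cover hV_ne hV_open hK'
    refine ⟨F.card * C, fun i => ?_⟩
    calc ν i K' ≤ ν i (⋃ t ∈ F, t +ᵥ V) := measure_mono hF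
      _ ≤ ∑ t ∈ F, ν i (t +ᵥ V) := measure_biUnion_finset_le F _
      _ ≤ ∑ _t ∈ F, (C : ℝ≥0∞) := Finset.sum_le_sum fun t _ => hbdd i t
      _ = ((F.card * C : ℝ≥0) : ℝ≥0∞) := by
          simp [Finset.sum_const, nsmul_eq_mul]
  -- integrability of compactly supported continuous functions times `h i`
  have hinteg : ∀ (f : G → ℂ), Continuous f → HasCompactSupport f →
      ∀ i, Integrable (fun s => f s * h i s) (ν i) := by
    intro f hfc hfs i
    obtain ⟨M, hM⟩ := bound _ hfs
    obtain ⟨x0, hx0⟩ := (hfc.norm).exists_forall_ge_of_hasCompactSupport hfs.norm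
    refine Integrable.mono' (g := (tsupport f).indicator fun _ => ‖f x0‖)
      ?_ ?_ ?_
    · refine (integrable_indicator_iff (isClosed_tsupport f).measurableSet).2 ?_
      exact integrableOn_const (lt_of_le_of_lt (hM i) ENNReal.coe_lt_top).ne
    · exact (hfc.stronglyMeasurable.mul (hh_meas i).stronglyMeasurable).aestronglyMeasurable
    · refine Eventually.of_forall fun s => ?_
      rw [norm_mul, hh_norm i s, mul_one]
      by_cases hs : s ∈ tsupport f
      · simpa [Set.indicator_of_mem hs] using hx0 s
      · simp [Set.indicator_of_notMem hs, image_eq_zero_of_notMem_tsupport hs]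
  -- the key uniform estimate
  have hkey : ∀ (f : G → ℂ) (K' : Set G) (M : ℝ≥0) (δ : ℝ),
      tsupport f ⊆ K' → MeasurableSet K' → (∀ i, ν i K' ≤ (M : ℝ≥0∞)) →
      (∀ s, ‖f s‖ ≤ δ) → ∀ i,
      AEStronglyMeasurable (fun s => f s * h i s) (ν i) →
      ‖∫ s, f s * h i s ∂ν i‖ ≤ δ * M := by
    intro f K' M δ hsub hK'm hM δbd i hmeas
    have hδ0 : 0 ≤ δ := le_trans (norm_nonneg _) (δbd 0)
    have hind : Integrable (K'.indicator fun _ => δ) (ν i) :=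
      (integrable_indicator_iff hK'm).2
        (integrableOn_const (lt_of_le_of_lt (hM i) ENNReal.coe_lt_top).ne)
    have hb : ∀ s, ‖f s * h i s‖ ≤ K'.indicator (fun _ => δ) s := by
      intro s
      rw [norm_mul, hh_norm i s, mul_one]
      by_cases hs : s ∈ K'
      · simpa [Set.indicator_of_mem hs] using δbd s
      · have : f s = 0 := image_eq_zero_of_notMem_tsupport fun hc => hs (hsub hc)
        simp [Set.indicator_of_notMem hs, this]
    calc ‖∫ s, f s * h i s ∂ν i‖ ≤ ∫ s, K'.indicator (fun _ => δ) s ∂ν i :=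
          norm_integral_le_of_norm_le hind (Eventually.of_forall hb)
      _ = (ν i K').toReal * δ := by
          rw [integral_indicator_const _ hK'm, smul_eq_mul, measureReal_def]
      _ ≤ (M : ℝ) * δ := by
          refine mul_le_mul_of_nonneg_right ?_ hδ0
          exact ENNReal.toReal_le_coe_of_le_coe (hM i)
      _ = δ * M := mul_comm _ _
  -- fixed compact neighborhood of 0 and the fixed compact set K
  obtain ⟨U₀, hU₀c, hU₀n⟩ := exists_compact_mem_nhds (0 : G)
  set K : Set G := tsupport φ ∪ (tsupport φ + -U₀) with hKdef
  have hts : IsCompact (tsupport φ) := hφs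
  have hKc : IsCompact K := hts.union (hts.add hU₀c.neg)
  obtain ⟨M, hM⟩ := bound K hKc
  set u : I → ℂ := fun i => ∫ s, φ s * h i s ∂ν i with hudef
  -- it suffices to show the net is Cauchy
  haveI : (atTop : Filter I).NeBot := atTop_neBot_iff.2 ⟨‹_›, ‹_›⟩
  suffices hcau : Cauchy (map u atTop) by
    obtain ⟨c, hc⟩ := CompleteSpace.complete hcau
    exact ⟨c, hc⟩
  rw [Metric.cauchy_iff]
  refine ⟨map_neBot, fun ε hε => ?_⟩
  set δ : ℝ := ε / (5 * ((M : ℝ) + 1)) with hδdef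
  have hM0 : (0 : ℝ) ≤ (M : ℝ) := M.coe_nonneg
  have hδ0 : 0 < δ := by
    apply div_pos hε
    positivity
  -- choose the bump function
  obtain ⟨U, hUn, hUprop⟩ := aux_unifcont hφc hφs hδ0
  obtain ⟨ψ, hψc, hψs, hψ0, hψsub, hψint⟩ := aux_bump haar (Filter.inter_mem hUn hU₀n)
  set ψC : G → ℂ := fun x => (ψ x : ℂ) with hψCdef
  have hψCc : Continuous ψC := Complex.continuous_ofReal.comp hψc
  have hψCs : HasCompactSupport ψC :=
    hψs.comp_left (g := fun y : ℝ => (y : ℂ)) (by simp)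
  set conv : G → ℂ := fun s => ∫ z, φ z * conj (ψC (z - s)) ∂haar with hconvdef
  -- integral of the shifted bump
  have hψshift : ∀ s : G, Integrable (fun z => ψ (z - s)) haar := by
    intro s
    apply Continuous.integrable_of_hasCompactSupport
    · exact hψc.comp (continuous_id.sub continuous_const)
    · exact hψs.comp_homeomorph (Homeomorph.subRight s)
  have hψshiftint : ∀ s : G, ∫ z, ψ (z - s) ∂haar = 1 := by
    intro s
    rw [integral_sub_right_eq_self ψ s, hψint]
  have hconst : ∀ s : G, ∫ z, conj (ψC (z - s)) ∂haar = 1 := by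
    intro s
    have : (fun z => conj (ψC (z - s))) = fun z => ((ψ (z - s) : ℝ) : ℂ) := by
      funext z; simp [hψCdef, Complex.conj_ofReal]
    rw [this]
    have heq : ∫ z, ((ψ (z - s) : ℝ) : ℂ) ∂haar = ((∫ z, ψ (z - s) ∂haar : ℝ) : ℂ) :=
      integral_ofReal
    rw [heq, hψshiftint s]
    norm_num
  -- the approximation estimate
  have approx : ∀ s, ‖conv s - φ s‖ ≤ δ := by
    intro s
    have e1 : Integrable (fun z => φ z * conj (ψC (z - s))) haar := by
      apply Continuous.integrable_of_hasCompactSupport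
      · exact hφc.mul (Complex.continuous_conj.comp
          (hψCc.comp (continuous_id.sub continuous_const)))
      · exact hφs.mul_right
    have e2 : Integrable (fun z => φ s * conj (ψC (z - s))) haar := by
      apply Integrable.const_mul
      apply Continuous.integrable_of_hasCompactSupport
      · exact Complex.continuous_conj.comp
          (hψCc.comp (continuous_id.sub continuous_const))
      · have h1 : HasCompactSupport (fun z : G => conj (ψC z)) :=
          hψCs.comp_left (g := fun y : ℂ => conj y) (by simp)
        exact h1.comp_homeomorph (Homeomorph.subRight s)
    have h2 : ∫ z, φ s * conj (ψC (z - s)) ∂haar = φ s := by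
      rw [integral_const_mul, hconst s, mul_one]
    have hdiffeq : conv s - φ s = ∫ z, (φ z - φ s) * conj (ψC (z - s)) ∂haar := by
      calc conv s - φ s
          = (∫ z, φ z * conj (ψC (z - s)) ∂haar)
            - ∫ z, φ s * conj (ψC (z - s)) ∂haar := by rw [h2]
        _ = ∫ z, (φ z * conj (ψC (z - s)) - φ s * conj (ψC (z - s))) ∂haar :=
            (integral_sub e1 e2).symm
        _ = ∫ z, (φ z - φ s) * conj (ψC (z - s)) ∂haar := by
            congr 1; funext z; ring
    rw [hdiffeq]
    have hbint : Integrable (fun z => δ * ψ (z - s)) haar := (hψshift s).const_mul δ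
    have hb : ∀ z, ‖(φ z - φ s) * conj (ψC (z - s))‖ ≤ δ * ψ (z - s) := by
      intro z
      rw [norm_mul]
      have hnc : ‖conj (ψC (z - s))‖ = ψ (z - s) := by
        rw [RCLike.norm_conj]
        simp [hψCdef, Complex.norm_real, abs_of_nonneg (hψ0 _)]
      rw [hnc]
      by_cases hz : ψ (z - s) = 0
      · simp [hz]
      · have hzU : z - s ∈ U := (Set.inter_subset_left (hψsub hz))
        have : ‖φ z - φ s‖ < δ := by
          have := hUprop s (z - s) hzU
          simpa [add_sub_cancel] using this
        exact mul_le_mul_of_nonneg_right this.le (hψ0 _)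
    calc ‖∫ z, (φ z - φ s) * conj (ψC (z - s)) ∂haar‖
        ≤ ∫ z, δ * ψ (z - s) ∂haar :=
          norm_integral_le_of_norm_le hbint (Eventually.of_forall hb)
      _ = δ * ∫ z, ψ (z - s) ∂haar := integral_const_mul _ _
      _ = δ := by rw [hψshiftint s, mul_one]
  -- continuity and compact support of conv
  set g : G → ℂ := fun w => ψC (-w) with hgdef
  have hgc : Continuous g := hψCc.comp continuous_neg
  have hgs : HasCompactSupport g := hψCs.comp_homeomorph (Homeomorph.neg G)
  have conv_eq : conv = MeasureTheory.convolution φ g (ContinuousLinearMap.mul ℝ ℂ) haar := by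
    funext s
    simp only [hconvdef]
    rw [MeasureTheory.convolution_def]
    simp only [ContinuousLinearMap.mul_apply']
    congr 1
    funext z
    simp [hgdef, hψCdef, Complex.conj_ofReal, neg_sub]
  have hconvc : Continuous conv := by
    rw [conv_eq]
    exact hgs.continuous_convolution_right _ (hφc.locallyIntegrable) hgc
  have hconvs : HasCompactSupport conv := by
    rw [conv_eq]
    exact HasCompactSupport.convolution (ContinuousLinearMap.mul ℝ ℂ) hφs hgs
  have hconvK : tsupport conv ⊆ K := by
    have h1 : Function.support conv ⊆ tsupport φ + -U₀ := by
      rw [conv_eq]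
      refine (MeasureTheory.support_convolution_subset _).trans ?_
      apply Set.add_subset_add (subset_tsupport φ)
      intro w hw
      have : -w ∈ Function.support ψC := by
        simp only [Function.mem_support] at hw ⊢
        simpa [hgdef] using hw
      have hw2 : -w ∈ U ∩ U₀ := hψsub (by simpa [hψCdef, Function.mem_support] using this)
      have : -w ∈ U₀ := hw2.2
      simpa using Set.neg_mem_neg.2 this
    have hcl : IsClosed (tsupport φ + -U₀) := (hts.add hU₀c.neg).isClosed
    have := closure_minimal h1 hcl
    exact this.trans Set.subset_union_right
  -- convergence of the convolution tests
  obtain ⟨c, hc⟩ := hconv φ ψC hφc hφs hψCc hψCs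
  have hc' : Tendsto (fun i => ∫ s, conv s * h i s ∂ν i) atTop (𝓝 c) := hc
  -- the difference bound
  have hdiff : ∀ i, ‖u i - ∫ s, conv s * h i s ∂ν i‖ ≤ δ * M := by
    intro i
    have hint1 := hinteg φ hφc hφs i
    have hint2 := hinteg conv hconvc hconvs i
    have heq : u i - (∫ s, conv s * h i s ∂ν i)
        = ∫ s, (φ s - conv s) * h i s ∂ν i := by
      rw [hudef, ← integral_sub hint1 hint2]
      congr 1; funext s; ring
    rw [heq]
    refine hkey (fun s => φ s - conv s) K M δ ?_ hKc.measurableSet hM ?_ i ?_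
    · refine (aux_tsupport_sub φ conv).trans ?_
      exact Set.union_subset (Set.subset_union_left.trans (by rw [hKdef])) hconvK
    · intro s
      rw [norm_sub_rev]
      exact approx s
    · exact ((hφc.sub hconvc).stronglyMeasurable.mul
        (hh_meas i).stronglyMeasurable).aestronglyMeasurable
  have hδM : δ * M ≤ ε / 5 := by
    have : δ * ((M : ℝ) + 1) = ε / 5 := by
      rw [hδdef]
      field_simp
    nlinarith [hδ0.le]
  -- assemble the Cauchy estimate
  have hev : ∀ᶠ i in atTop, dist (∫ s, conv s * h i s ∂ν i) c < ε / 5 :=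
    Metric.tendsto_nhds.1 hc' _ (by positivity)
  refine ⟨u '' {i | dist (∫ s, conv s * h i s ∂ν i) c < ε / 5}, image_mem_map hev, ?_⟩
  rintro x ⟨i, hi, rfl⟩ y ⟨j, hj, rfl⟩
  have d1 : dist (u i) (∫ s, conv s * h i s ∂ν i) ≤ ε / 5 := by
    rw [dist_eq_norm]; exact (hdiff i).trans hδM
  have d2 : dist (u j) (∫ s, conv s * h i s ∂ν i) ≤ dist (u j) c + dist c (∫ s, conv s * h i s ∂ν i) :=
    dist_triangle _ _ _
  have d3 : dist (u j) c ≤ dist (u j) (∫ s, conv s * h j s ∂ν j) + dist (∫ s, conv s * h j s ∂ν j) c :=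
    dist_triangle _ _ _
  have d4 : dist (u j) (∫ s, conv s * h j s ∂ν j) ≤ ε / 5 := by
    rw [dist_eq_norm]; exact (hdiff j).trans hδM
  have d5 : dist c (∫ s, conv s * h i s ∂ν i) < ε / 5 := by
    rw [dist_comm]; exact hi
  calc dist (u i) (u j)
      ≤ dist (u i) (∫ s, conv s * h i s ∂ν i) + dist (∫ s, conv s * h i s ∂ν i) (u j) :=
        dist_triangle _ _ _
    _ = dist (u i) (∫ s, conv s * h i s ∂ν i) + dist (u j) (∫ s, conv s * h i s ∂ν i) := by
        rw [dist_comm (∫ s, conv s * h i s ∂ν i) (u j)]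
    _ < ε := by
        have := hj
        simp only [Set.mem_setOf_eq] at hi this
        linarith
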